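/- In the stopping-cube setting, for every a ∈ ℤ and every S ∈ 𝒮^a: (i) Σ_{S' ∈ 𝒮^a, S' ⊆ S} |S'| ≤ (4/3)·|S|, and (ii) ‖ Σ_{S' ∈ 𝒮^a, S' ⊊ S} 1_{S'} ‖_{L²(ℝ^N)} ≤ |S|^{1/2}. -/

import Mathlib

open MeasureTheory
open scoped ENNReal

noncomputable section

/-- Points of `ℝ^N` with the `ℓ^∞` (sup) metric, as `Fin N → ℝ`. -/
abbrev Euc (N : ℕ) := Fin N → ℝ

/-- The axis-parallel half-open cube with lower-left corner `c` and sidelength `l`. -/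
def cube {N : ℕ} (c : Euc N) (l : ℝ) : Set (Euc N) :=
  {x | ∀ i, c i ≤ x i ∧ x i < c i + l}

/-- Binary sequences `β = (β_j)_{j ∈ ℤ}` with `β_j ∈ {0,1}^N`, parametrising the
translated dyadic systems. -/
abbrev BSeq (N : ℕ) := ℤ → Fin N → Bool

/-- The translation `Σ_{j > k} 2^{-j} β_j` applied to dyadic cubes of sidelength `2^{-k}`. -/
def betaShift {N : ℕ} (β : BSeq N) (k : ℤ) : Euc N :=
  fun i => ∑' j : {j : ℤ // k < j}, (2 : ℝ) ^ (-(j : ℤ)) * (if β j i then 1 else 0)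

/-- The cube `I ∔ β` of the translated dyadic system `𝒟^β`, where `I ∈ 𝒟⁰` has
sidelength `2^{-k}` and lower-left corner `2^{-k}·p`, `p ∈ ℤ^N`. -/
def dyCube {N : ℕ} (β : BSeq N) (k : ℤ) (p : Fin N → ℤ) : Set (Euc N) :=
  cube (fun i => (p i : ℝ) * (2 : ℝ) ^ (-k) + betaShift β k i) ((2 : ℝ) ^ (-k))

/-- The data of a dyadic shift: for each dyadic cube (indexed by scale `k` and
position `p`) a kernel `a_K : ℝ^N × ℝ^N → ℝ`. -/
abbrev ShiftKernel (N : ℕ) := ℤ → (Fin N → ℤ) → Euc N → Euc N → ℝ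

/-- `a` is (the kernel family of) a dyadic shift with parameters `(u,v)` and constant `A`
on the dyadic system `𝒟^β`: each `a_K` is measurable, supported on `K × K`, bounded by `A`,
constant in `x` on dyadic cubes of sidelength `2^{-v-1}ℓ(K)` and constant in `y` on dyadic
cubes of sidelength `2^{-u-1}ℓ(K)`. -/
structure IsShift {N : ℕ} (β : BSeq N) (u v : ℕ) (A : ℝ) (a : ShiftKernel N) : Prop where
  meas : ∀ k p, Measurable (fun xy : Euc N × Euc N => a k p xy.1 xy.2)
  suppK : ∀ k p x y, a k p x y ≠ 0 → x ∈ dyCube β k p ∧ y ∈ dyCube β k p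
  bdd : ∀ k p x y, |a k p x y| ≤ A
  constX : ∀ k p p' x x' y, x ∈ dyCube β (k + v + 1) p' → x' ∈ dyCube β (k + v + 1) p' →
    a k p x y = a k p x' y
  constY : ∀ k p p' x y y', y ∈ dyCube β (k + u + 1) p' → y' ∈ dyCube β (k + u + 1) p' →
    a k p x y = a k p x y'

/-- The shift is finite: only finitely many of the kernels `a_K` are nonzero. -/
def ShiftFinite {N : ℕ} (a : ShiftKernel N) : Prop :=
  {kp : ℤ × (Fin N → ℤ) | ∃ x y, a kp.1 kp.2 x y ≠ 0}.Finite

/-- The dyadic shift operator `𝕊f(x) = Σ_K |K|⁻¹ ∫_K a_K(x,y) f(y) dy`. -/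
def shiftOp {N : ℕ} (β : BSeq N) (a : ShiftKernel N) (f : Euc N → ℝ) (x : Euc N) : ℝ :=
  ∑' kp : ℤ × (Fin N → ℤ),
    (((2 : ℝ) ^ (-kp.1)) ^ N)⁻¹ * ∫ y in dyCube β kp.1 kp.2, a kp.1 kp.2 x y * f y

/-- The shift restricted to a subcollection `𝒞` of dyadic cubes:
`𝕊_𝒞 f(x) = Σ_{K ∈ 𝒞} |K|⁻¹ ∫_K a_K(x,y) f(y) dy`. -/
def shiftOpOn {N : ℕ} (β : BSeq N) (C : Set (ℤ × (Fin N → ℤ))) (a : ShiftKernel N)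
    (f : Euc N → ℝ) (x : Euc N) : ℝ :=
  ∑' kp : C,
    (((2 : ℝ) ^ (-(kp : ℤ × (Fin N → ℤ)).1)) ^ N)⁻¹ *
      ∫ y in dyCube β (kp : ℤ × (Fin N → ℤ)).1 (kp : ℤ × (Fin N → ℤ)).2,
        a (kp : ℤ × (Fin N → ℤ)).1 (kp : ℤ × (Fin N → ℤ)).2 x y * f y

/-- The shift is good with goodness parameter `γ`: nonvanishing of `a_K(x,y)` forces
`dist(x, ∂K) ≥ 2^{-1-vγ} ℓ(K)` and `dist(y, ∂K) ≥ 2^{-1-uγ} ℓ(K)` (`ℓ^∞` distances). -/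
def IsGoodShift {N : ℕ} (β : BSeq N) (γ : ℝ) (u v : ℕ) (a : ShiftKernel N) : Prop :=
  ∀ k p x y, a k p x y ≠ 0 →
    (2 : ℝ) ^ (-1 - (v : ℝ) * γ) * (2 : ℝ) ^ (-k) ≤
        Metric.infDist x (frontier (dyCube β k p)) ∧
      (2 : ℝ) ^ (-1 - (u : ℝ) * γ) * (2 : ℝ) ^ (-k) ≤
        Metric.infDist y (frontier (dyCube β k p))

/-- The shift is bounded on (unweighted) `L²` with norm at most `A`. -/
def ShiftL2Bounded {N : ℕ} (β : BSeq N) (A : ℝ) (a : ShiftKernel N) : Prop :=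
  ∀ h : Euc N → ℝ, MemLp h 2 volume →
    ∫⁻ x, ENNReal.ofReal ((shiftOp β a h x) ^ 2) ≤
      ENNReal.ofReal (A ^ 2) * ∫⁻ x, ENNReal.ofReal ((h x) ^ 2)

/-- The set of all local `A₂` products `(⨍_Q w)(⨍_Q w⁻¹)` over axis-parallel cubes `Q`. -/
def A2set {N : ℕ} (w : Euc N → ℝ) : Set ℝ :=
  {t | ∃ (c : Euc N) (l : ℝ), 0 < l ∧
    t = (⨍ x in cube c l, w x) * (⨍ x in cube c l, (w x)⁻¹)}

/-- The `A₂` characteristic `[w]_{A₂} = sup_Q (⨍_Q w)(⨍_Q w⁻¹)`. -/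
def A2const {N : ℕ} (w : Euc N → ℝ) : ℝ := sSup (A2set w)

/-- `w` is an `A₂` weight: positive, with `w` and `w⁻¹` locally integrable, and with
finite `A₂` characteristic (the set of local `A₂` products is bounded above). -/
structure IsA2Weight {N : ℕ} (w : Euc N → ℝ) : Prop where
  meas : Measurable w
  pos : ∀ x, 0 < w x
  locInt : LocallyIntegrable w volume
  locIntInv : LocallyIntegrable (fun x => (w x)⁻¹) volume
  bddA2 : BddAbove (A2set w)

/-- The inner part `K̂` of a dyadic cube: points at `ℓ^∞`-distance at least
`2^{-max(u,v)γ} ℓ(K)` from `∂K`. -/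
def hatCube {N : ℕ} (β : BSeq N) (u v : ℕ) (γ : ℝ) (k : ℤ) (p : Fin N → ℤ) :
    Set (Euc N) :=
  {x ∈ dyCube β k p |
    (2:ℝ) ^ (-(max u v : ℝ) * γ) * (2:ℝ) ^ (-k) ≤
      Metric.infDist x (frontier (dyCube β k p))}

/-- The collection `𝒦`: dyadic cubes `K` with `K̂ ∩ Q ≠ ∅` and `ℓ(K) < ℓ(Q)`, whose
sidelengths lie in the residue class `ρ` of `log₂ ℓ(K) mod (v+1)`. Here `Q` is the cube
with corner `Qc` and sidelength `Ql`. -/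
def calK {N : ℕ} (β : BSeq N) (u v : ℕ) (γ : ℝ) (Qc : Euc N) (Ql : ℝ) (ρ : ℤ) :
    Set (ℤ × (Fin N → ℤ)) :=
  {kp | (hatCube β u v γ kp.1 kp.2 ∩ cube Qc Ql).Nonempty ∧ (2:ℝ) ^ (-kp.1) < Ql ∧
    ((v : ℤ) + 1) ∣ (kp.1 - ρ)}

/-- The ratio `w(K ∩ Q)/|K|` for the dyadic cube `K` indexed by `kp`. -/
def wRatio {N : ℕ} (β : BSeq N) (w : Euc N → ℝ) (Qc : Euc N) (Ql : ℝ)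
    (kp : ℤ × (Fin N → ℤ)) : ℝ :=
  (∫ x in dyCube β kp.1 kp.2 ∩ cube Qc Ql, w x) / ((2:ℝ) ^ (-kp.1)) ^ N

/-- The ratio `σ(K)/|K|`, `σ := w⁻¹`, for the dyadic cube `K` indexed by `kp`. -/
def sigRatio {N : ℕ} (β : BSeq N) (w : Euc N → ℝ) (kp : ℤ × (Fin N → ℤ)) : ℝ :=
  (∫ x in dyCube β kp.1 kp.2, (w x)⁻¹) / ((2:ℝ) ^ (-kp.1)) ^ N

/-- The collection `𝒦^a`: cubes of `𝒦` with local `A₂` product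
`(w(K∩Q)/|K|)(σ(K)/|K|)` in `(2^a, 2^{a+1}]`. -/
def calKa {N : ℕ} (β : BSeq N) (u v : ℕ) (γ : ℝ) (w : Euc N → ℝ) (Qc : Euc N) (Ql : ℝ)
    (ρ : ℤ) (a : ℤ) : Set (ℤ × (Fin N → ℤ)) :=
  {kp ∈ calK β u v γ Qc Ql ρ |
    (2:ℝ) ^ a < wRatio β w Qc Ql kp * sigRatio β w kp ∧
      wRatio β w Qc Ql kp * sigRatio β w kp ≤ (2:ℝ) ^ (a + 1)}

/-- The generations `𝒮^a_n` of stopping cubes: `𝒮^a_0` are the maximal cubes of `𝒦^a`,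
and `𝒮^a_{n+1}` the maximal `K ∈ 𝒦^a` with `w(K∩Q)/|K| > 4·w(S∩Q)/|S|` for some
`S ∈ 𝒮^a_n` strictly containing `K`. -/
def stopFam {N : ℕ} (β : BSeq N) (u v : ℕ) (γ : ℝ) (w : Euc N → ℝ) (Qc : Euc N)
    (Ql : ℝ) (ρ : ℤ) (a : ℤ) : ℕ → Set (ℤ × (Fin N → ℤ))
  | 0 =>
    {kp ∈ calKa β u v γ w Qc Ql ρ a |
      ∀ kp' ∈ calKa β u v γ w Qc Ql ρ a,
        dyCube β kp.1 kp.2 ⊆ dyCube β kp'.1 kp'.2 →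
          dyCube β kp'.1 kp'.2 = dyCube β kp.1 kp.2}
  | (n + 1) =>
    {kp | (kp ∈ calKa β u v γ w Qc Ql ρ a ∧
        ∃ s ∈ stopFam β u v γ w Qc Ql ρ a n,
          dyCube β kp.1 kp.2 ⊂ dyCube β s.1 s.2 ∧
            4 * wRatio β w Qc Ql s < wRatio β w Qc Ql kp) ∧
      ∀ kp', (kp' ∈ calKa β u v γ w Qc Ql ρ a ∧
          ∃ s ∈ stopFam β u v γ w Qc Ql ρ a n,
            dyCube β kp'.1 kp'.2 ⊂ dyCube β s.1 s.2 ∧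
              4 * wRatio β w Qc Ql s < wRatio β w Qc Ql kp') →
        dyCube β kp.1 kp.2 ⊆ dyCube β kp'.1 kp'.2 →
          dyCube β kp'.1 kp'.2 = dyCube β kp.1 kp.2}

/-- The full stopping family `𝒮^a = ⋃_n 𝒮^a_n`. -/
def stopSet {N : ℕ} (β : BSeq N) (u v : ℕ) (γ : ℝ) (w : Euc N → ℝ) (Qc : Euc N)
    (Ql : ℝ) (ρ : ℤ) (a : ℤ) : Set (ℤ × (Fin N → ℤ)) :=
  ⋃ n : ℕ, stopFam β u v γ w Qc Ql ρ a n

/-- The collection `𝒦^a(S)` of cubes of `𝒦^a` whose minimal stopping cube is `S`. -/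
def calKaS {N : ℕ} (β : BSeq N) (u v : ℕ) (γ : ℝ) (w : Euc N → ℝ) (Qc : Euc N)
    (Ql : ℝ) (ρ : ℤ) (a : ℤ) (s : ℤ × (Fin N → ℤ)) : Set (ℤ × (Fin N → ℤ)) :=
  {kp ∈ calKa β u v γ w Qc Ql ρ a |
    dyCube β kp.1 kp.2 ⊆ dyCube β s.1 s.2 ∧
      ∀ s' ∈ stopSet β u v γ w Qc Ql ρ a,
        dyCube β kp.1 kp.2 ⊆ dyCube β s'.1 s'.2 →
          dyCube β s.1 s.2 ⊆ dyCube β s'.1 s'.2}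

/-- The collection `𝒦^a_b(S)` of cubes `K ∈ 𝒦^a(S)` with
`2^{1-b} w(S∩Q)/|S| < w(K∩Q)/|K| ≤ 2^{2-b} w(S∩Q)/|S|`. -/
def calKaSb {N : ℕ} (β : BSeq N) (u v : ℕ) (γ : ℝ) (w : Euc N → ℝ) (Qc : Euc N)
    (Ql : ℝ) (ρ : ℤ) (a : ℤ) (s : ℤ × (Fin N → ℤ)) (b : ℕ) : Set (ℤ × (Fin N → ℤ)) :=
  {kp ∈ calKaS β u v γ w Qc Ql ρ a s |
    (2:ℝ) ^ (1 - (b : ℤ)) * wRatio β w Qc Ql s < wRatio β w Qc Ql kp ∧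
      wRatio β w Qc Ql kp ≤ (2:ℝ) ^ (2 - (b : ℤ)) * wRatio β w Qc Ql s}

/-!
Within one generation the stopping cubes are pairwise disjoint, and each cube of the next
generation inside `S` lies in a parent `T` of the previous one on which its `w`-density exceeds
four times that of `T`. Comparing `w`-masses, these children of `T` cover at most `|T|/4`, so the
generations below `S` have total volume at most `|S|(1 + 1/4 + 1/16 + ⋯) = (4/3)|S|`.
For (ii), expanding the square of `∑ 1_{S'}` gives `∑ |S' ∩ S''|`; dyadic cubes are nested or
disjoint, so this is at most `2 ∑_{S'} ∑_{S'' ⊆ S'} |S''| ≤ (8/3) ∑_{S' ⊊ S} |S'| ≤ (8/9)|S|`.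
-/

open Set Function

section Measure

variable {α ι : Type*} [MeasurableSpace α] [Countable ι] {μ ν : Measure α}

theorem lintegral_sq_tsum_indicator_le {E : ι → Set α} (hE : ∀ i, MeasurableSet (E i))
    (hlam : ∀ i j, (E i ∩ E j).Nonempty → E i ⊆ E j ∨ E j ⊆ E i) {C : ℝ≥0∞}
    (hC : ∀ i, ∑' j : {j // E j ⊆ E i}, μ (E j) ≤ C * μ (E i)) :
    ∫⁻ x, (∑' i, (E i).indicator (1 : α → ℝ≥0∞) x) ^ 2 ∂μ ≤ 2 * C * ∑' i, μ (E i) := by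
  set below : ι → ι → ℝ≥0∞ := fun i => {j | E j ⊆ E i}.indicator fun j => μ (E j)
  have hsq : ∀ x, (∑' i, (E i).indicator (1 : α → ℝ≥0∞) x) ^ 2 =
      ∑' i, ∑' j, (E i ∩ E j).indicator (1 : α → ℝ≥0∞) x := by
    intro x
    rw [sq, ← ENNReal.tsum_mul_right]
    refine tsum_congr fun i => ?_
    rw [← ENNReal.tsum_mul_left]
    simp only [inter_indicator_one, Pi.mul_apply]
  have hinter : ∀ i j, μ (E i ∩ E j) ≤ below i j + below j i := by
    intro i j
    rcases (E i ∩ E j).eq_empty_or_nonempty with h | h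
    · simp [h]
    rcases hlam i j h with hij | hji
    · calc μ (E i ∩ E j) ≤ μ (E i) := measure_mono inter_subset_left
        _ = below j i := by simp [below, hij]
        _ ≤ _ := le_add_self
    · calc μ (E i ∩ E j) ≤ μ (E j) := measure_mono inter_subset_right
        _ = below i j := by simp [below, hji]
        _ ≤ _ := le_self_add
  have hbelow : ∀ i, ∑' j, below i j ≤ C * μ (E i) := fun i =>
    (tsum_subtype {j | E j ⊆ E i} fun j => μ (E j)) ▸ hC i
  calc ∫⁻ x, (∑' i, (E i).indicator (1 : α → ℝ≥0∞) x) ^ 2 ∂μ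
      = ∑' i, ∑' j, μ (E i ∩ E j) := by
        simp_rw [hsq]
        rw [lintegral_tsum fun i => (Measurable.tsum fun j =>
          measurable_one.indicator ((hE i).inter (hE j))).aemeasurable]
        refine tsum_congr fun i => ?_
        rw [lintegral_tsum fun j => (measurable_one.indicator ((hE i).inter (hE j))).aemeasurable]
        exact tsum_congr fun j => lintegral_indicator_one ((hE i).inter (hE j))
    _ ≤ ∑' i, ∑' j, (below i j + below j i) :=
        ENNReal.tsum_le_tsum fun i => ENNReal.tsum_le_tsum fun j => hinter i j
    _ = 2 * ∑' i, ∑' j, below i j := by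
        simp_rw [ENNReal.tsum_add]
        rw [ENNReal.tsum_comm (f := fun i j => below j i), two_mul]
    _ ≤ 2 * ∑' i, C * μ (E i) := by gcongr 2 * ?_; exact ENNReal.tsum_le_tsum hbelow
    _ = 2 * C * ∑' i, μ (E i) := by rw [ENNReal.tsum_mul_left, mul_assoc]

theorem mul_tsum_measure_le_of_pairwise_disjoint {K : ι → Set α} {T : Set α} {c : ℝ≥0∞}
    (hK : ∀ i, MeasurableSet (K i)) (hdisj : Pairwise (Disjoint on K)) (hKT : ∀ i, K i ⊆ T)
    (hdens : ∀ i, c * μ (K i) ≤ ν (K i)) :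
    c * ∑' i, μ (K i) ≤ ν T :=
  calc c * ∑' i, μ (K i) = ∑' i, c * μ (K i) := ENNReal.tsum_mul_left.symm
    _ ≤ ∑' i, ν (K i) := ENNReal.tsum_le_tsum hdens
    _ = ν (⋃ i, K i) := (measure_iUnion hdisj hK).symm
    _ ≤ ν T := measure_mono (iUnion_subset hKT)

end Measure

theorem ENNReal.tsum_iUnion_le_of_tsum_succ_le {ι : Type*} (f : ι → ℝ≥0∞) (D : ℕ → Set ι)
    {r : ℝ≥0∞} (h : ∀ k, ∑' x : D (k + 1), f x ≤ r * ∑' x : D k, f x) :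
    ∑' x : ⋃ k, D k, f x ≤ (1 - r)⁻¹ * ∑' x : D 0, f x := by
  have hpow : ∀ k, ∑' x : D k, f x ≤ r ^ k * ∑' x : D 0, f x := by
    intro k
    induction k with
    | zero => rw [pow_zero, one_mul]
    | succ k ih =>
      calc ∑' x : D (k + 1), f x ≤ r * ∑' x : D k, f x := h k
        _ ≤ r * (r ^ k * ∑' x : D 0, f x) := by gcongr
        _ = r ^ (k + 1) * ∑' x : D 0, f x := by ring
  calc ∑' x : ⋃ k, D k, f x ≤ ∑' k, ∑' x : D k, f x := ENNReal.tsum_iUnion_le_tsum f D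
    _ ≤ ∑' k, r ^ k * ∑' x : D 0, f x := ENNReal.tsum_le_tsum hpow
    _ = (1 - r)⁻¹ * ∑' x : D 0, f x := by rw [ENNReal.tsum_mul_right, ENNReal.tsum_geometric]

section Cubes

variable {N : ℕ}

theorem cube_eq_pi (c : Euc N) (l : ℝ) : cube c l = univ.pi fun i => Ico (c i) (c i + l) := by
  ext x; simp [cube, mem_pi]

theorem measurableSet_cube (c : Euc N) (l : ℝ) : MeasurableSet (cube c l) := by
  rw [cube_eq_pi]; exact .univ_pi fun _ => measurableSet_Ico

theorem volume_cube (c : Euc N) {l : ℝ} (hl : 0 ≤ l) :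
    volume (cube c l) = ENNReal.ofReal (l ^ N) := by
  simp [cube_eq_pi, volume_pi_pi, ENNReal.ofReal_pow hl]

theorem self_mem_cube (c : Euc N) {l : ℝ} (hl : 0 < l) : c ∈ cube c l :=
  fun _ => ⟨le_rfl, lt_add_of_pos_right _ hl⟩

theorem cube_subset_Icc (c : Euc N) (l : ℝ) : cube c l ⊆ Icc c (c + fun _ => l) :=
  fun _ hx => ⟨fun i => (hx i).1, fun i => (hx i).2.le⟩

theorem cube_inj [NeZero N] {c c' : Euc N} {l l' : ℝ} (hl : 0 < l)
    (h : cube c l = cube c' l') : c = c' ∧ l = l' := by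
  have hne : (cube c l).Nonempty := ⟨c, self_mem_cube c hl⟩
  simp only [cube_eq_pi] at h hne
  have hIco : ∀ i, c i = c' i ∧ c i + l = c' i + l' := by
    intro i
    have := congrArg ((fun x : Euc N => x i) '' ·) h
    rw [eval_image_univ_pi hne, eval_image_univ_pi (h ▸ hne)] at this
    exact (Ico_eq_Ico_iff (Or.inl (by linarith))).1 this
  refine ⟨funext fun i => (hIco i).1, ?_⟩
  have := hIco 0
  linarith

end Cubes

section BetaShift

variable {N : ℕ}

def ioiEquivNat (k : ℤ) : ℕ ≃ {j : ℤ // k < j} where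
  toFun n := ⟨k + 1 + n, by omega⟩
  invFun j := (j.1 - (k + 1)).toNat
  left_inv n := by simp
  right_inv j := Subtype.ext (by simp; omega)

theorem two_zpow_neg_add_natCast (k : ℤ) (n : ℕ) :
    (2 : ℝ) ^ (-(k + n)) = 2 ^ (-k) * 2⁻¹ ^ n := by
  rw [neg_add, zpow_add₀ two_ne_zero, zpow_neg (2 : ℝ) n, zpow_natCast, inv_pow]

theorem betaShift_eq_tsum_nat (β : BSeq N) (k : ℤ) (i : Fin N) :
    betaShift β k i =
      ∑' n : ℕ, (2 : ℝ) ^ (-(k + 1 + n)) * (if β (k + 1 + n) i then 1 else 0) :=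
  ((ioiEquivNat k).tsum_eq fun j => (2 : ℝ) ^ (-(j : ℤ)) * (if β j i then 1 else 0)).symm

theorem summable_betaShift_terms (β : BSeq N) (k : ℤ) (i : Fin N) :
    Summable fun n : ℕ => (2 : ℝ) ^ (-(k + 1 + n)) * (if β (k + 1 + n) i then 1 else 0) := by
  refine .of_nonneg_of_le (fun n => by positivity) (fun n => ?_)
    ((summable_geometric_of_lt_one (r := 2⁻¹) (by norm_num) (by norm_num)).mul_left
      ((2 : ℝ) ^ (-(k + 1))))
  rw [two_zpow_neg_add_natCast]
  exact mul_le_of_le_one_right (by positivity) (by split_ifs <;> norm_num)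

theorem betaShift_eq_add_succ (β : BSeq N) (k : ℤ) (i : Fin N) :
    betaShift β k i =
      (2 : ℝ) ^ (-(k + 1)) * (if β (k + 1) i then 1 else 0) + betaShift β (k + 1) i := by
  rw [betaShift_eq_tsum_nat, (summable_betaShift_terms β k i).tsum_eq_zero_add,
    betaShift_eq_tsum_nat]
  push_cast
  simp only [add_zero, add_assoc, add_comm (1 : ℤ)]

theorem exists_betaShift_eq_add_int_mul (β : BSeq N) (k : ℤ) (d : ℕ) (i : Fin N) :
    ∃ M : ℤ, betaShift β k i = betaShift β (k + d) i + M * (2 : ℝ) ^ (-(k + d)) := by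
  induction d with
  | zero => exact ⟨0, by simp⟩
  | succ d ih =>
    obtain ⟨M, hM⟩ := ih
    refine ⟨2 * M + if β (k + d + 1) i then 1 else 0, ?_⟩
    have h2 : (2 : ℝ) ^ (-(k + d)) = 2 * 2 ^ (-(k + d + 1)) := by
      rw [show -(k + d) = -(k + d + 1) + 1 by ring, zpow_add_one₀ two_ne_zero, mul_comm]
    rw [hM, betaShift_eq_add_succ β (k + d), h2]
    push_cast
    rw [← add_assoc]
    split_ifs <;> ring

end BetaShift

section Dyadic

variable {N : ℕ}

theorem Ico_grid_subset {a b L : ℤ} {t c : ℝ} (ht : 0 < t)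
    (h : (Ico (b * t + c) (b * t + c + t) ∩ Ico (a * t + c) (a * t + c + L * t)).Nonempty) :
    Ico (b * t + c) (b * t + c + t) ⊆ Ico (a * t + c) (a * t + c + L * t) := by
  obtain ⟨x, ⟨hb₁, hb₂⟩, ha₁, ha₂⟩ := h
  have hab : (a : ℝ) ≤ b := by
    have : (a : ℝ) < b + 1 := lt_of_mul_lt_mul_right (by linarith) ht.le
    exact_mod_cast Int.lt_add_one_iff.1 (by exact_mod_cast this)
  have hba : (b : ℝ) + 1 ≤ a + L := by
    have : (b : ℝ) < a + L := lt_of_mul_lt_mul_right (by linarith) ht.le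
    exact_mod_cast Int.add_one_le_iff.2 (by exact_mod_cast this)
  exact Ico_subset_Ico (by nlinarith) (by nlinarith)

theorem exists_dyCube_corner_eq (β : BSeq N) {k k' : ℤ} (hk : k ≤ k') (p : Fin N → ℤ)
    (i : Fin N) : ∃ a L : ℤ,
      p i * (2 : ℝ) ^ (-k) + betaShift β k i = a * 2 ^ (-k') + betaShift β k' i ∧
        (2 : ℝ) ^ (-k) = L * 2 ^ (-k') := by
  obtain ⟨d, rfl⟩ : ∃ d : ℕ, k' = k + d := ⟨(k' - k).toNat, by omega⟩
  obtain ⟨M, hM⟩ := exists_betaShift_eq_add_int_mul β k d i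
  have hL : (2 : ℝ) ^ (-k) = (2 ^ d : ℤ) * 2 ^ (-(k + d)) := by
    rw [two_zpow_neg_add_natCast, Int.cast_pow, Int.cast_ofNat, ← mul_assoc, mul_comm _ (2 ^ (-k)),
      mul_assoc, ← mul_pow, mul_inv_cancel₀ two_ne_zero, one_pow, mul_one]
  refine ⟨p i * 2 ^ d + M, 2 ^ d, ?_, hL⟩
  rw [hM, hL]
  push_cast
  ring

theorem dyCube_subset_of_le (β : BSeq N) {k k' : ℤ} (hk : k ≤ k') (p p' : Fin N → ℤ)
    (h : (dyCube β k' p' ∩ dyCube β k p).Nonempty) : dyCube β k' p' ⊆ dyCube β k p := by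
  obtain ⟨x, hx', hx⟩ := h
  intro y hy i
  obtain ⟨a, L, hc, hl⟩ := exists_dyCube_corner_eq β hk p i
  have hsub := Ico_grid_subset (a := a) (L := L) (zpow_pos two_pos (-k'))
    ⟨x i, hx' i, by simpa only [mem_Ico, ← hc, ← hl] using hx i⟩
  simpa only [mem_Ico, ← hc, ← hl] using hsub (hy i)

abbrev dyCubeAt (β : BSeq N) (K : ℤ × (Fin N → ℤ)) : Set (Euc N) := dyCube β K.1 K.2

theorem dyCubeAt_subset_or_subset (β : BSeq N) {K K' : ℤ × (Fin N → ℤ)}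
    (h : (dyCubeAt β K ∩ dyCubeAt β K').Nonempty) :
    dyCubeAt β K ⊆ dyCubeAt β K' ∨ dyCubeAt β K' ⊆ dyCubeAt β K := by
  rcases le_total K'.1 K.1 with hk | hk
  · exact .inl (dyCube_subset_of_le β hk _ _ h)
  · exact .inr (dyCube_subset_of_le β hk _ _ (inter_comm _ _ ▸ h))

theorem dyCubeAt_injective [NeZero N] (β : BSeq N) : Injective (dyCubeAt β) := by
  intro K K' h
  obtain ⟨hc, hl⟩ := cube_inj (zpow_pos two_pos _) h
  have hk : K.1 = K'.1 := neg_injective (zpow_right_injective₀ two_pos (by norm_num) hl)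
  refine Prod.ext hk (funext fun i => ?_)
  have := congrFun hc i
  rw [hk] at this
  exact_mod_cast mul_right_cancel₀ (zpow_pos two_pos (-K'.1)).ne' (add_right_cancel this)

theorem measurableSet_dyCubeAt (β : BSeq N) (K : ℤ × (Fin N → ℤ)) :
    MeasurableSet (dyCubeAt β K) := measurableSet_cube _ _

theorem volume_dyCubeAt (β : BSeq N) (K : ℤ × (Fin N → ℤ)) :
    volume (dyCubeAt β K) = ENNReal.ofReal ((2 ^ (-K.1)) ^ N) := volume_cube _ (by positivity)

theorem dyCubeAt_nonempty (β : BSeq N) (K : ℤ × (Fin N → ℤ)) : (dyCubeAt β K).Nonempty :=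
  ⟨_, self_mem_cube _ (zpow_pos two_pos _)⟩

end Dyadic

section StoppingCubes

variable {N : ℕ} {β : BSeq N} {u v : ℕ} {γ : ℝ} {w : Euc N → ℝ} {Qc : Euc N} {Ql : ℝ}
  {ρ a : ℤ} {m n : ℕ} {K K' S T : ℤ × (Fin N → ℤ)}

local notation "𝒮" => stopFam β u v γ w Qc Ql ρ a
local notation "𝒬" => dyCubeAt β

theorem mem_calKa_of_mem_stopFam (hK : K ∈ 𝒮 n) : K ∈ calKa β u v γ w Qc Ql ρ a := by
  cases n with
  | zero => exact hK.1
  | succ n => exact hK.1.1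

theorem neZero_of_mem_calK (hK : K ∈ calK β u v γ Qc Ql ρ) : NeZero N := by
  refine ⟨fun hN => ?_⟩
  subst hN
  obtain ⟨x, ⟨-, hx⟩, -⟩ := hK.1
  have huniv : dyCube β K.1 K.2 = univ := eq_univ_of_forall fun y i => i.elim0
  rw [huniv, frontier_univ, Metric.infDist_empty] at hx
  have : (0 : ℝ) < 2 ^ (-(max u v : ℝ) * γ) * 2 ^ (-K.1) := by positivity
  linarith

theorem dyCubeAt_eq_of_mem_stopFam (hK : K ∈ 𝒮 n) (hK' : K' ∈ 𝒮 n) (h : 𝒬 K ⊆ 𝒬 K') :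
    𝒬 K' = 𝒬 K := by
  cases n with
  | zero => exact hK.2 K' hK'.1 h
  | succ n => exact hK.2 K' hK'.1 h

theorem eq_of_mem_stopFam [NeZero N] (hK : K ∈ 𝒮 n) (hK' : K' ∈ 𝒮 n)
    (h : (𝒬 K ∩ 𝒬 K').Nonempty) : K = K' :=
  dyCubeAt_injective β <| (dyCubeAt_subset_or_subset β h).elim
    (fun h => (dyCubeAt_eq_of_mem_stopFam hK hK' h).symm)
    (fun h => dyCubeAt_eq_of_mem_stopFam hK' hK h)

theorem exists_ancestor_of_mem_stopFam {j : ℕ} (hK : K ∈ 𝒮 (m + j)) :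
    ∃ S ∈ 𝒮 m, 𝒬 K ⊆ 𝒬 S ∧ (0 < j → 𝒬 K ⊂ 𝒬 S) := by
  induction j generalizing K with
  | zero => exact ⟨K, hK, subset_rfl, by omega⟩
  | succ j ih =>
    obtain ⟨T, hT, hKT, -⟩ := hK.1.2
    obtain ⟨S, hS, hTS, -⟩ := ih hT
    exact ⟨S, hS, hKT.subset.trans hTS, fun _ => hKT.trans_subset hTS⟩

theorem not_subset_of_mem_stopFam_of_lt [NeZero N] (hnm : n < m) (hK : K ∈ 𝒮 n) (hS : S ∈ 𝒮 m) :
    ¬ 𝒬 K ⊆ 𝒬 S := by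
  intro hKS
  obtain ⟨j, rfl⟩ : ∃ j, m = n + j := ⟨m - n, by omega⟩
  obtain ⟨T, hT, -, hST⟩ := exists_ancestor_of_mem_stopFam hS
  have hST := hST (by omega)
  obtain rfl : K = T := eq_of_mem_stopFam hK hT
    ((dyCubeAt_nonempty β K).mono (subset_inter subset_rfl (hKS.trans hST.subset)))
  exact (hKS.trans_ssubset hST).ne rfl

def stopChildren (β : BSeq N) (u v : ℕ) (γ : ℝ) (w : Euc N → ℝ) (Qc : Euc N) (Ql : ℝ)
    (ρ a : ℤ) (n : ℕ) (T : ℤ × (Fin N → ℤ)) : Set (ℤ × (Fin N → ℤ)) :=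
  {K | K ∈ stopFam β u v γ w Qc Ql ρ a n ∧ dyCubeAt β K ⊂ dyCubeAt β T ∧
    4 * wRatio β w Qc Ql T < wRatio β w Qc Ql K}

theorem exists_mem_stopChildren [NeZero N] {k : ℕ} (hS : S ∈ 𝒮 m) (hK : K ∈ 𝒮 (m + k + 1))
    (hKS : 𝒬 K ⊆ 𝒬 S) :
    ∃ T ∈ 𝒮 (m + k), 𝒬 T ⊆ 𝒬 S ∧ K ∈ stopChildren β u v γ w Qc Ql ρ a (m + k + 1) T := by
  obtain ⟨T, hT, hKT, hdens⟩ := hK.1.2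
  obtain ⟨S', hS', hTS', -⟩ := exists_ancestor_of_mem_stopFam hT
  obtain rfl : S' = S := eq_of_mem_stopFam hS' hS
    ((dyCubeAt_nonempty β K).mono (subset_inter (hKT.subset.trans hTS') hKS))
  exact ⟨T, hT, hTS', hK, hKT, hdens⟩

theorem wRatio_nonneg (hw : 0 ≤ w) : 0 ≤ wRatio β w Qc Ql K :=
  div_nonneg (integral_nonneg hw) (by positivity)

theorem wRatio_pos (hw : 0 ≤ w) (hK : K ∈ calKa β u v γ w Qc Ql ρ a) :
    0 < wRatio β w Qc Ql K := by
  refine (wRatio_nonneg hw).lt_of_ne fun h => ?_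
  have := hK.2.1
  rw [← h, zero_mul] at this
  exact (zpow_pos two_pos a).not_gt this

theorem ofReal_wRatio_mul_volume (hw : 0 ≤ w) (hloc : LocallyIntegrable w volume) :
    ENNReal.ofReal (wRatio β w Qc Ql K) * volume (𝒬 K) =
      (volume.restrict (cube Qc Ql)).withDensity (fun x => ENNReal.ofReal (w x)) (𝒬 K) := by
  have hint : IntegrableOn w (𝒬 K ∩ cube Qc Ql) :=
    (hloc.integrableOn_isCompact isCompact_Icc).mono_set
      (inter_subset_left.trans (cube_subset_Icc _ _))
  rw [withDensity_apply _ (measurableSet_dyCubeAt β K),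
    Measure.restrict_restrict (measurableSet_dyCubeAt β K), volume_dyCubeAt,
    ← ENNReal.ofReal_mul (wRatio_nonneg hw), wRatio, div_mul_cancel₀ _ (by positivity),
    ofReal_integral_eq_lintegral_ofReal hint (.of_forall hw)]

theorem tsum_volume_stopChildren_le [NeZero N] (hw : 0 ≤ w) (hloc : LocallyIntegrable w volume)
    (hT : T ∈ calKa β u v γ w Qc Ql ρ a) (n : ℕ) :
    ∑' K : stopChildren β u v γ w Qc Ql ρ a n T, volume (𝒬 K) ≤ 4⁻¹ * volume (𝒬 T) := by
  set r := ENNReal.ofReal (wRatio β w Qc Ql T)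
  have hr : r ≠ 0 := ENNReal.ofReal_pos.2 (wRatio_pos hw hT) |>.ne'
  have hdisj : Pairwise (Disjoint on fun K : stopChildren β u v γ w Qc Ql ρ a n T => 𝒬 K) :=
    fun K K' hne => disjoint_iff_inter_eq_empty.2 <| not_nonempty_iff_eq_empty.1
      fun h => hne (Subtype.ext (eq_of_mem_stopFam K.2.1 K'.2.1 h))
  have hdens : ∀ K : stopChildren β u v γ w Qc Ql ρ a n T, 4 * r * volume (𝒬 K) ≤
      (volume.restrict (cube Qc Ql)).withDensity (fun x => ENNReal.ofReal (w x)) (𝒬 K) := by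
    intro K
    rw [← ofReal_wRatio_mul_volume hw hloc, ← ENNReal.ofReal_ofNat 4,
      ← ENNReal.ofReal_mul (by norm_num)]
    gcongr
    exact K.2.2.2.le
  have key := mul_tsum_measure_le_of_pairwise_disjoint
    (K := fun K : stopChildren β u v γ w Qc Ql ρ a n T => 𝒬 K)
    (fun K => measurableSet_dyCubeAt β K) hdisj (fun K => K.2.2.1.subset) hdens
  rw [← ofReal_wRatio_mul_volume hw hloc, mul_comm 4 r, mul_assoc,
    ENNReal.mul_le_mul_iff_right hr ENNReal.ofReal_ne_top] at key
  exact (ENNReal.mul_le_iff_le_inv (by norm_num) (by norm_num)).1 key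

theorem tsum_volume_stopSet_subset_le [NeZero N] (hw : 0 ≤ w) (hloc : LocallyIntegrable w volume)
    (hS : S ∈ stopSet β u v γ w Qc Ql ρ a) :
    ∑' K : {K | K ∈ stopSet β u v γ w Qc Ql ρ a ∧ 𝒬 K ⊆ 𝒬 S}, volume (𝒬 K) ≤
      4 / 3 * volume (𝒬 S) := by
  obtain ⟨m, hm⟩ := mem_iUnion.1 hS
  set D : ℕ → Set (ℤ × (Fin N → ℤ)) := fun k => {K | K ∈ 𝒮 (m + k) ∧ 𝒬 K ⊆ 𝒬 S}
  have hcover : {K | K ∈ stopSet β u v γ w Qc Ql ρ a ∧ 𝒬 K ⊆ 𝒬 S} ⊆ ⋃ k, D k := by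
    rintro K ⟨hK, hKS⟩
    obtain ⟨n, hn⟩ := mem_iUnion.1 hK
    have hmn : m ≤ n := not_lt.1 fun hnm => not_subset_of_mem_stopFam_of_lt hnm hn hm hKS
    exact mem_iUnion.2 ⟨n - m, by rwa [Nat.add_sub_cancel' hmn], hKS⟩
  have hD₀ : D 0 ⊆ {S} := fun K hK => eq_of_mem_stopFam hK.1 hm
    ((dyCubeAt_nonempty β K).mono (subset_inter subset_rfl hK.2))
  have hdecay : ∀ k, ∑' K : D (k + 1), volume (𝒬 K) ≤ 4⁻¹ * ∑' T : D k, volume (𝒬 T) := by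
    intro k
    have hsub : D (k + 1) ⊆ ⋃ T : D k, stopChildren β u v γ w Qc Ql ρ a (m + k + 1) T := by
      intro K hK
      obtain ⟨T, hT, hTS, hKT⟩ := exists_mem_stopChildren hm hK.1 hK.2
      exact mem_iUnion.2 ⟨⟨T, hT, hTS⟩, hKT⟩
    calc ∑' K : D (k + 1), volume (𝒬 K)
        ≤ ∑' T : D k, ∑' K : stopChildren β u v γ w Qc Ql ρ a (m + k + 1) T, volume (𝒬 K) :=
          (ENNReal.tsum_mono_subtype (fun K => volume (𝒬 K)) hsub).trans
            (ENNReal.tsum_iUnion_le_tsum (fun K => volume (𝒬 K)) _)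
      _ ≤ ∑' T : D k, 4⁻¹ * volume (𝒬 T) := ENNReal.tsum_le_tsum fun T =>
          tsum_volume_stopChildren_le hw hloc (mem_calKa_of_mem_stopFam T.2.1) _
      _ = 4⁻¹ * ∑' T : D k, volume (𝒬 T) := ENNReal.tsum_mul_left
  have hgeom : (1 - 4⁻¹ : ℝ≥0∞)⁻¹ = 4 / 3 := by
    rw [← ENNReal.toReal_eq_toReal_iff' (by simp [tsub_eq_zero_iff_le]) (by finiteness),
      ENNReal.toReal_inv, ENNReal.toReal_sub_of_le (by norm_num) (by norm_num)]
    norm_num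
  calc ∑' K : {K | K ∈ stopSet β u v γ w Qc Ql ρ a ∧ 𝒬 K ⊆ 𝒬 S}, volume (𝒬 K)
      ≤ ∑' K : ⋃ k, D k, volume (𝒬 K) :=
        ENNReal.tsum_mono_subtype (fun K => volume (𝒬 K)) hcover
    _ ≤ (1 - 4⁻¹)⁻¹ * ∑' K : D 0, volume (𝒬 K) :=
        ENNReal.tsum_iUnion_le_of_tsum_succ_le (fun K => volume (𝒬 K)) D hdecay
    _ ≤ 4 / 3 * volume (𝒬 S) := by
        rw [hgeom]
        gcongr
        exact (ENNReal.tsum_mono_subtype (fun K => volume (𝒬 K)) hD₀).trans_eq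
          (tsum_singleton S fun K => volume (𝒬 K))

theorem tsum_volume_stopSet_ssubset_le [NeZero N] (hw : 0 ≤ w) (hloc : LocallyIntegrable w volume)
    (hS : S ∈ stopSet β u v γ w Qc Ql ρ a) :
    ∑' K : {K | K ∈ stopSet β u v γ w Qc Ql ρ a ∧ 𝒬 K ⊂ 𝒬 S}, volume (𝒬 K) ≤
      3⁻¹ * volume (𝒬 S) := by
  have hsplit : {K | K ∈ stopSet β u v γ w Qc Ql ρ a ∧ 𝒬 K ⊆ 𝒬 S} =
      {S} ∪ {K | K ∈ stopSet β u v γ w Qc Ql ρ a ∧ 𝒬 K ⊂ 𝒬 S} := by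
    ext K
    refine ⟨fun ⟨hK, hKS⟩ => ?_, ?_⟩
    · by_cases h : K = S
      · exact .inl h
      · exact .inr ⟨hK, hKS.ssubset_of_ne fun h' => h (dyCubeAt_injective β h')⟩
    · rintro (rfl | ⟨hK, hKS⟩)
      exacts [⟨hS, subset_rfl⟩, ⟨hK, hKS.subset⟩]
  have hdisj : Disjoint {S} {K | K ∈ stopSet β u v γ w Qc Ql ρ a ∧ 𝒬 K ⊂ 𝒬 S} :=
    disjoint_singleton_left.2 fun h => h.2.ne rfl
  have h43 : (4 / 3 : ℝ≥0∞) = 1 + 3⁻¹ := by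
    rw [← ENNReal.toReal_eq_toReal_iff' (by finiteness) (by finiteness),
      ENNReal.toReal_add (by simp) (by simp), ENNReal.toReal_div, ENNReal.toReal_inv]
    norm_num
  have h := tsum_volume_stopSet_subset_le hw hloc hS
  rw [hsplit, ENNReal.summable.tsum_union_disjoint (f := fun K => volume (𝒬 K)) hdisj
    ENNReal.summable, tsum_singleton S fun K => volume (𝒬 K), h43, add_mul, one_mul] at h
  exact (ENNReal.add_le_add_iff_left (by rw [volume_dyCubeAt]; exact ENNReal.ofReal_ne_top)).1 h

theorem lintegral_sq_tsum_indicator_stopSet_ssubset_le [NeZero N] (hw : 0 ≤ w)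
    (hloc : LocallyIntegrable w volume) (hS : S ∈ stopSet β u v γ w Qc Ql ρ a) :
    ∫⁻ x, (∑' K : {K | K ∈ stopSet β u v γ w Qc Ql ρ a ∧ 𝒬 K ⊂ 𝒬 S},
      (𝒬 K).indicator 1 x) ^ 2 ≤ volume (𝒬 S) := by
  set A := {K | K ∈ stopSet β u v γ w Qc Ql ρ a ∧ 𝒬 K ⊂ 𝒬 S}
  have hpack : ∀ T : A, ∑' K : {K : A // 𝒬 K ⊆ 𝒬 T}, volume (𝒬 K) ≤ 4 / 3 * volume (𝒬 T) :=
    fun T => (ENNReal.tsum_comp_le_tsum_of_injective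
      (f := fun K : {K : A // 𝒬 K ⊆ 𝒬 T} =>
        (⟨K.1.1, K.1.2.1, K.2⟩ : {K | K ∈ stopSet β u v γ w Qc Ql ρ a ∧ 𝒬 K ⊆ 𝒬 T}))
      (fun K K' h => Subtype.ext <| Subtype.ext <| by simpa using congrArg Subtype.val h) _).trans
      (tsum_volume_stopSet_subset_le hw hloc T.2.1)
  calc ∫⁻ x, (∑' K : A, (𝒬 K).indicator 1 x) ^ 2
      ≤ 2 * (4 / 3) * ∑' K : A, volume (𝒬 K) :=
        lintegral_sq_tsum_indicator_le (E := fun K : A => 𝒬 K)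
          (fun K => measurableSet_dyCubeAt β K) (fun K K' => dyCubeAt_subset_or_subset β) hpack
    _ ≤ 2 * (4 / 3) * (3⁻¹ * volume (𝒬 S)) := by
        gcongr; exact tsum_volume_stopSet_ssubset_le hw hloc hS
    _ ≤ volume (𝒬 S) := by
        refine (mul_assoc (2 * (4 / 3) : ℝ≥0∞) _ _).symm.trans_le
          (mul_le_of_le_one_left (by positivity) ?_)
        rw [← ENNReal.toReal_le_toReal (by finiteness) (by simp)]
        simp [ENNReal.toReal_div]
        norm_num

end StoppingCubes

theorem statement_16_general (N : ℕ) (β : BSeq N) (u v : ℕ) (γ : ℝ) (w : Euc N → ℝ) (hw : IsA2Weight w)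
    (Qc : Euc N) (Ql : ℝ) (ρ : ℤ) (a : ℤ) (s : ℤ × (Fin N → ℤ))
    (hs : s ∈ stopSet β u v γ w Qc Ql ρ a) :
    (∑' s' : {kp // kp ∈ stopSet β u v γ w Qc Ql ρ a ∧
          dyCube β kp.1 kp.2 ⊆ dyCube β s.1 s.2},
        volume (dyCube β (s' : ℤ × (Fin N → ℤ)).1 (s' : ℤ × (Fin N → ℤ)).2))
      ≤ (4 / 3 : ℝ≥0∞) * volume (dyCube β s.1 s.2) ∧
    (∫⁻ x, (∑' s' : {kp // kp ∈ stopSet β u v γ w Qc Ql ρ a ∧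
          dyCube β kp.1 kp.2 ⊂ dyCube β s.1 s.2},
        (dyCube β (s' : ℤ × (Fin N → ℤ)).1 (s' : ℤ × (Fin N → ℤ)).2).indicator
          (fun _ => (1 : ℝ≥0∞)) x) ^ 2)
      ≤ volume (dyCube β s.1 s.2) := by
  obtain ⟨m, hm⟩ := mem_iUnion.1 hs
  have := neZero_of_mem_calK (mem_calKa_of_mem_stopFam hm).1
  have hw₀ : 0 ≤ w := fun x => (hw.pos x).le
  exact ⟨tsum_volume_stopSet_subset_le hw₀ hw.locInt hs,
    lintegral_sq_tsum_indicator_stopSet_ssubset_le hw₀ hw.locInt hs⟩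

/-- the stopping cubes contained in a fixed `S ∈ 𝒮^a` have total volume
at most `(4/3)|S|`, and the `L²` norm of the sum of the indicators of the strictly
smaller stopping cubes is at most `|S|^{1/2}`. -/
theorem statement_16 (N : ℕ) (β : BSeq N) (u v : ℕ) (γ : ℝ) (hγ0 : 0 < γ)
    (hγ2 : γ < 1/2) (w : Euc N → ℝ) (hw : IsA2Weight w) (Qc : Euc N) (Ql : ℝ)
    (hQl : 0 < Ql) (ρ : ℤ) (a : ℤ) (s : ℤ × (Fin N → ℤ))
    (hs : s ∈ stopSet β u v γ w Qc Ql ρ a) :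
    (∑' s' : {kp // kp ∈ stopSet β u v γ w Qc Ql ρ a ∧
          dyCube β kp.1 kp.2 ⊆ dyCube β s.1 s.2},
        volume (dyCube β (s' : ℤ × (Fin N → ℤ)).1 (s' : ℤ × (Fin N → ℤ)).2))
      ≤ (4 / 3 : ℝ≥0∞) * volume (dyCube β s.1 s.2) ∧
    (∫⁻ x, (∑' s' : {kp // kp ∈ stopSet β u v γ w Qc Ql ρ a ∧
          dyCube β kp.1 kp.2 ⊂ dyCube β s.1 s.2},
        (dyCube β (s' : ℤ × (Fin N → ℤ)).1 (s' : ℤ × (Fin N → ℤ)).2).indicator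
          (fun _ => (1 : ℝ≥0∞)) x) ^ 2)
      ≤ volume (dyCube β s.1 s.2) :=
  statement_16_general N β u v γ w hw Qc Ql ρ a s hs
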